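/- arXiv:cs/0003080 — 3 statements merged into one kernel-verified Lean document; each statement's English description precedes it below -/
import Mathlib

section
/- A single AND constraint with domains D_x, D_y, D_z ⊆ {0,1} (all nonempty) is hyper-arc consistent if and only if it is closed under the six AND rules of the proof system BOOL; i.e., the following are equivalent: (1) for every a ∈ D_x there exist b ∈ D_y, c ∈ D_z with min a b = c, and symmetrically for D_y and D_z; (2) the domains satisfy all of: if D_x = {1} and D_y = {1} then D_z = {1}; if D_x = {1} and D_z = {0} then D_y = {0}; if D_y = {1} and D_z = {0} then D_x = {0}; if D_x = {0} then D_z = {0}; if D_y = {0} then D_z = {0}; if D_z = {1} then D_x = {1} and D_y = {1}. -/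
private lemma bool_forall {D : Set Bool} {P : Bool → Prop} :
    (∀ a ∈ D, P a) ↔ ((true ∈ D → P true) ∧ (false ∈ D → P false)) := by
  constructor
  · intro h; exact ⟨fun ht => h _ ht, fun hf => h _ hf⟩
  · rintro ⟨h1, h2⟩ a ha; cases a; exacts [h2 ha, h1 ha]

private lemma bool_exists {D : Set Bool} {P : Bool → Prop} :
    (∃ a ∈ D, P a) ↔ ((true ∈ D ∧ P true) ∨ (false ∈ D ∧ P false)) := by
  constructor
  · rintro ⟨a, ha, hp⟩; cases a; exacts [Or.inr ⟨ha, hp⟩, Or.inl ⟨ha, hp⟩]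
  · rintro (⟨h, hp⟩ | ⟨h, hp⟩); exacts [⟨_, h, hp⟩, ⟨_, h, hp⟩]

private lemma bool_eq_singleton {D : Set Bool} {b : Bool} :
    D = {b} ↔ (b ∈ D ∧ ¬b ∈ D → False) ∧ b ∈ D ∧ (!b) ∉ D := by
  constructor
  · rintro rfl; simp
  · rintro ⟨-, hb, hnb⟩; ext a; cases a <;> cases b <;> simp_all

private lemma bool_eq_singleton' {D : Set Bool} {b : Bool} :
    D = {b} ↔ b ∈ D ∧ (!b) ∉ D := by
  constructor
  · rintro rfl; simp
  · rintro ⟨hb, hnb⟩; ext a; cases a <;> cases b <;> simp_all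

/-- A single AND constraint with nonempty Boolean domains is hyper-arc consistent
iff it is closed under the six AND rules of BOOL (`true` = 1, `false` = 0). -/
theorem and_hyperarc_iff_bool_closed (Dx Dy Dz : Set Bool)
    (hx : Dx.Nonempty) (hy : Dy.Nonempty) (hz : Dz.Nonempty) :
    ((∀ a ∈ Dx, ∃ b ∈ Dy, ∃ c ∈ Dz, (a && b) = c) ∧
     (∀ b ∈ Dy, ∃ a ∈ Dx, ∃ c ∈ Dz, (a && b) = c) ∧
     (∀ c ∈ Dz, ∃ a ∈ Dx, ∃ b ∈ Dy, (a && b) = c))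
    ↔
    ((Dx = {true} → Dy = {true} → Dz = {true}) ∧
     (Dx = {true} → Dz = {false} → Dy = {false}) ∧
     (Dy = {true} → Dz = {false} → Dx = {false}) ∧
     (Dx = {false} → Dz = {false}) ∧
     (Dy = {false} → Dz = {false}) ∧
     (Dz = {true} → Dx = {true} ∧ Dy = {true})) := by
  obtain ⟨x0, hx0⟩ := hx
  obtain ⟨y0, hy0⟩ := hy
  obtain ⟨z0, hz0⟩ := hz
  simp only [bool_forall, bool_exists, bool_eq_singleton']
  cases x0 <;> cases y0 <;> cases z0 <;>
    by_cases h1 : true ∈ Dx <;> by_cases h2 : false ∈ Dx <;>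
    by_cases h3 : true ∈ Dy <;> by_cases h4 : false ∈ Dy <;>
    by_cases h5 : true ∈ Dz <;> by_cases h6 : false ∈ Dz <;>
    simp_all
end

section
/- A single OR constraint with nonempty domains D_x, D_y, D_z ⊆ {0,1} is hyper-arc consistent if and only if it is closed under the six OR rules of BOOL: if D_x = {1} then D_z = {1}; if D_x = {0} and D_y = {0} then D_z = {0}; if D_x = {0} and D_z = {1} then D_y = {1}; if D_y = {0} and D_z = {1} then D_x = {1}; if D_y = {1} then D_z = {1}; if D_z = {0} then D_x = {0} and D_y = {0}. -/
theorem Bool.set_eq_singleton_or_eq_univ {D : Set Bool} (hD : D.Nonempty) :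
    D = {false} ∨ D = {true} ∨ D = Set.univ := by
  simpa using hD.subset_pair_iff_eq.1 (Bool.univ_eq ▸ Set.subset_univ D)

/-- A single OR constraint with nonempty Boolean domains is hyper-arc consistent
iff it is closed under the six OR rules of BOOL. -/
theorem or_hyperarc_iff_bool_closed (Dx Dy Dz : Set Bool)
    (hx : Dx.Nonempty) (hy : Dy.Nonempty) (hz : Dz.Nonempty) :
    ((∀ a ∈ Dx, ∃ b ∈ Dy, ∃ c ∈ Dz, (a || b) = c) ∧
     (∀ b ∈ Dy, ∃ a ∈ Dx, ∃ c ∈ Dz, (a || b) = c) ∧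
     (∀ c ∈ Dz, ∃ a ∈ Dx, ∃ b ∈ Dy, (a || b) = c))
    ↔
    ((Dx = {true} → Dz = {true}) ∧
     (Dx = {false} → Dy = {false} → Dz = {false}) ∧
     (Dx = {false} → Dz = {true} → Dy = {true}) ∧
     (Dy = {false} → Dz = {true} → Dx = {true}) ∧
     (Dy = {true} → Dz = {true}) ∧
     (Dz = {false} → Dx = {false} ∧ Dy = {false})) := by
  rcases Bool.set_eq_singleton_or_eq_univ hx with rfl | rfl | rfl <;>
  rcases Bool.set_eq_singleton_or_eq_univ hy with rfl | rfl | rfl <;>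
  rcases Bool.set_eq_singleton_or_eq_univ hz with rfl | rfl | rfl <;>
  -- unfolding `univ` to `{false, true}` would leave goals like `{true, false} ≠ {true}` to simp
  simp [-Bool.univ_eq, (Set.singleton_ne_univ _).symm]
end

section
/- If nonempty domains D_x, D_y, D_z ⊆ {0,1} for the AND constraint are closed under the rule AND 1' (if D_x = {1} then the constraint reduces so that D_y = D_z), then D_x = {1} implies D_y = D_z; moreover closure under all BOOL' AND rules implies hyper-arc consistency of the AND constraint. -/
/-!
Each rule, read contrapositively, says that a value missing from one domain forces a value to
be missing from another. A nonempty subset of `Bool` missing a value is a singleton, so the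
rules yield, for every value of every domain, the membership facts its support needs:
`false ∈ Dx → false ∈ Dz`, `true ∈ Dx → (Dy ∩ Dz).Nonempty`, the same with `x` and `y`
swapped, `true ∈ Dz → true ∈ Dx ∧ true ∈ Dy` and `false ∈ Dz → false ∈ Dx ∨ false ∈ Dy`.
-/

theorem Bool.set_eq_singleton_not_of_notMem {D : Set Bool} {b : Bool} (hD : D.Nonempty)
    (hb : b ∉ D) : D = {!b} :=
  hD.subset_singleton_iff.mp fun _ hc => Bool.eq_not_of_ne (ne_of_mem_of_not_mem hc hb)

section AndRules

variable {Dx Dy Dz : Set Bool}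

theorem false_mem_of_false_mem_of_eq_singleton_true (hz : Dz.Nonempty)
    (h3 : Dz = {true} → Dx = {true}) (hx : false ∈ Dx) : false ∈ Dz := by
  by_contra hfz
  have := h3 (Bool.set_eq_singleton_not_of_notMem hz hfz)
  simp [this] at hx

theorem true_mem_of_true_mem_of_eq_singleton_false (hx : Dx.Nonempty)
    (h4 : Dx = {false} → Dz = {false}) (hz : true ∈ Dz) : true ∈ Dx := by
  by_contra htx
  have := h4 (Bool.set_eq_singleton_not_of_notMem hx htx)
  simp [this] at hz

theorem false_mem_or_false_mem_of_false_mem (hx : Dx.Nonempty) (hy : Dy.Nonempty)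
    (h1 : Dx = {true} → Dy = Dz) (hz : false ∈ Dz) : false ∈ Dx ∨ false ∈ Dy := by
  by_contra! h
  have hDy : Dy = {true} := Bool.set_eq_singleton_not_of_notMem hy h.2
  have := h1 (Bool.set_eq_singleton_not_of_notMem hx h.1)
  simp [← this, hDy] at hz

theorem inter_nonempty_of_true_mem (hx : Dx.Nonempty) (hy : Dy.Nonempty) (hz : Dz.Nonempty)
    (h1 : Dx = {true} → Dy = Dz) (h2 : Dy = {true} → Dx = Dz) (h3 : Dz = {true} → Dx = {true})
    (htx : true ∈ Dx) : (Dy ∩ Dz).Nonempty := by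
  by_cases hfx : false ∈ Dx
  · have hfz := false_mem_of_false_mem_of_eq_singleton_true hz h3 hfx
    by_cases hfy : false ∈ Dy
    · exact ⟨false, hfy, hfz⟩
    · have hDy : Dy = {true} := Bool.set_eq_singleton_not_of_notMem hy hfy
      exact ⟨true, by simp [hDy], h2 hDy ▸ htx⟩
  · rw [h1 (Bool.set_eq_singleton_not_of_notMem hx hfx), Set.inter_self]
    exact hz

theorem forall_mem_exists_and_eq (hy : Dy.Nonempty) (hf : false ∈ Dx → false ∈ Dz)
    (ht : true ∈ Dx → (Dy ∩ Dz).Nonempty) : ∀ a ∈ Dx, ∃ b ∈ Dy, ∃ c ∈ Dz, (a && b) = c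
  | false, ha => ⟨hy.some, hy.some_mem, false, hf ha, Bool.false_and _⟩
  | true, ha =>
    let ⟨b, hby, hbz⟩ := ht ha
    ⟨b, hby, b, hbz, Bool.true_and b⟩

theorem forall_mem_exists_and_eq_of_mem (hx : Dx.Nonempty) (hy : Dy.Nonempty)
    (ht : true ∈ Dz → true ∈ Dx ∧ true ∈ Dy) (hf : false ∈ Dz → false ∈ Dx ∨ false ∈ Dy) :
    ∀ c ∈ Dz, ∃ a ∈ Dx, ∃ b ∈ Dy, (a && b) = c
  | true, hc => ⟨true, (ht hc).1, true, (ht hc).2, rfl⟩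
  | false, hc => by
    rcases hf hc with hfx | hfy
    · exact ⟨false, hfx, hy.some, hy.some_mem, Bool.false_and _⟩
    · exact ⟨hx.some, hx.some_mem, false, hfy, Bool.and_false _⟩

end AndRules

/-- If nonempty domains for the AND constraint are closed under the BOOL' AND rules
(AND 1': Dx = {1} → Dy = Dz; AND 2': Dy = {1} → Dx = Dz; AND 3'/6': Dz = {1} →
Dx = {1} ∧ Dy = {1}; AND 4: Dx = {0} → Dz = {0}; AND 5: Dy = {0} → Dz = {0}),
then Dx = {1} implies Dy = Dz, and the AND constraint is hyper-arc consistent. -/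
theorem boolprime_and_closure_implies_hyperarc (Dx Dy Dz : Set Bool)
    (hx : Dx.Nonempty) (hy : Dy.Nonempty) (hz : Dz.Nonempty)
    (h1 : Dx = {true} → Dy = Dz)
    (h2 : Dy = {true} → Dx = Dz)
    (h3 : Dz = {true} → Dx = {true} ∧ Dy = {true})
    (h4 : Dx = {false} → Dz = {false})
    (h5 : Dy = {false} → Dz = {false}) :
    (Dx = {true} → Dy = Dz) ∧
    ((∀ a ∈ Dx, ∃ b ∈ Dy, ∃ c ∈ Dz, (a && b) = c) ∧
     (∀ b ∈ Dy, ∃ a ∈ Dx, ∃ c ∈ Dz, (a && b) = c) ∧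
     (∀ c ∈ Dz, ∃ a ∈ Dx, ∃ b ∈ Dy, (a && b) = c)) := by
  refine ⟨h1, ?_, ?_, ?_⟩
  · exact forall_mem_exists_and_eq hy
      (false_mem_of_false_mem_of_eq_singleton_true hz fun h => (h3 h).1)
      (inter_nonempty_of_true_mem hx hy hz h1 h2 fun h => (h3 h).1)
  · simpa only [Bool.and_comm] using forall_mem_exists_and_eq hx
      (false_mem_of_false_mem_of_eq_singleton_true hz fun h => (h3 h).2)
      (inter_nonempty_of_true_mem hy hx hz h2 h1 fun h => (h3 h).2)
  · exact forall_mem_exists_and_eq_of_mem hx hy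
      (fun h => ⟨true_mem_of_true_mem_of_eq_singleton_false hx h4 h,
        true_mem_of_true_mem_of_eq_singleton_false hy h5 h⟩)
      (false_mem_or_false_mem_of_false_mem hx hy h1)
end
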